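/- arXiv:1407.7014 — 5 statements merged into one kernel-verified Lean document; each statement's English description precedes it below -/
import Mathlib

section
/- Let V be a finite abelian group and k a field whose group of units k* is divisible. Then the map Alt : Z²(V,k*) → Hom(V×V, k*) sending a 2-cocycle α to the function (x,y) ↦ α(x,y)/α(y,x) takes values in skew-symmetric bicharacters, is a group homomorphism, and induces an isomorphism H²(V,k*) ≅ ∧²V̂, the group of skew-symmetric bicharacters on V with values in k*. -/
/-- A normalized 2-cocycle on a finite abelian group `V` with values in `kˣ`
(with trivial action). -/
def IsCocycle3 {V k : Type} [CommGroup V] [Field k] (α : V → V → kˣ) : Prop :=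
  (∀ x, α 1 x = 1 ∧ α x 1 = 1) ∧
  ∀ x y z, α x y * α (x * y) z = α y z * α x (y * z)

/-- A skew-symmetric bicharacter on `V` with values in `kˣ`. -/
def IsSkewBichar3 {V k : Type} [CommGroup V] [Field k] (ω : V → V → kˣ) : Prop :=
  (∀ x y z, ω (x * y) z = ω x z * ω y z) ∧
  (∀ x y z, ω x (y * z) = ω x y * ω x z) ∧
  (∀ x, ω x x = 1)

/-- A 2-coboundary on `V` with values in `kˣ`. -/
def IsCoboundary3 {V k : Type} [CommGroup V] [Field k] (β : V → V → kˣ) : Prop :=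
  ∃ η : V → kˣ, η 1 = 1 ∧ ∀ x y, β x y = η x * η y * (η (x * y))⁻¹

/-!
`alt α (x, y) = α(x, y) / α(y, x)` is a homomorphism on all functions `V → V → A`. On a cocycle it
is bimultiplicative, by a three-term combination of the cocycle identity, and alternating by
construction. Its kernel on cocycles consists of the symmetric cocycles. A normalized symmetric
cocycle `γ` twists the multiplication of `V × A` into an abelian extension `E` of `V` by `A`; a
divisible group is injective, so the inclusion `A → E` has a retraction `r`, and `γ` is the
coboundary of `x ↦ r (x, 1)`. For surjectivity, split `V` into ordered cyclic factors with
projections `pᵢ` and put `β(x, y) = ∏_{i<j} ω(pᵢ x, pⱼ y)`. This is a bicharacter, hence a cocycle,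
and `β(x, y) / β(y, x) = ∏_{i≠j} ω(pᵢ x, pⱼ y) = ω(x, y)` because the alternating form `ω` vanishes
on each cyclic factor.
-/

open Finset

section Cocycles

variable {V A : Type*} [CommGroup A]

def alt : (V → V → A) →* (V → V → A) where
  toFun α x y := α x y * (α y x)⁻¹
  map_one' := by ext; simp
  map_mul' α β := by ext x y; simp only [Pi.mul_apply, mul_inv, mul_mul_mul_comm]

theorem alt_apply (α : V → V → A) (x y : V) : alt α x y = α x y * (α y x)⁻¹ := rfl

theorem alt_swap (α : V → V → A) (x y : V) : alt α y x = (alt α x y)⁻¹ := by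
  simp only [alt_apply, mul_inv_rev, inv_inv]

theorem alt_self (α : V → V → A) (x : V) : alt α x x = 1 := mul_inv_cancel _

theorem alt_eq_alt_iff (α β : V → V → A) (x y : V) :
    alt α x y = alt β x y ↔ (α * β⁻¹) x y = (α * β⁻¹) y x := by
  rw [← mul_inv_eq_one, ← mul_inv_eq_one (a := (α * β⁻¹) x y), ← alt_apply, map_mul, map_inv]
  rfl

variable [CommGroup V]

def twoCocycles : Subgroup (V → V → A) where
  carrier := {α | ∀ x y z, α x y * α (x * y) z = α y z * α x (y * z)}
  one_mem' _ _ _ := rfl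
  mul_mem' {α β} hα hβ x y z := by
    simp only [Pi.mul_apply]
    rw [mul_mul_mul_comm, hα, hβ, mul_mul_mul_comm]
  inv_mem' {α} hα x y z := by
    simp only [Pi.inv_apply]
    rw [← mul_inv, hα, mul_inv]

theorem bichar_mem_twoCocycles (β : V →* V →* A) : (fun x y => β x y) ∈ twoCocycles := by
  intro x y z
  simp only [map_mul, MonoidHom.mul_apply, mul_comm, mul_left_comm]

theorem alt_mul_left {α : V → V → A} (hα : α ∈ twoCocycles) (x y z : V) :
    alt α (x * y) z = alt α x z * alt α y z := by
  have h₁ := congrArg Additive.ofMul (hα x y z)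
  have h₂ := congrArg Additive.ofMul (hα z x y)
  have h₃ := congrArg Additive.ofMul (hα x z y)
  rw [mul_comm z x] at h₂
  rw [mul_comm z y] at h₃
  apply Additive.ofMul.injective
  simp only [alt_apply, ofMul_mul, ofMul_inv] at h₁ h₂ h₃ ⊢
  linear_combination (norm := abel) h₁ + h₂ - h₃

theorem alt_mul_right {α : V → V → A} (hα : α ∈ twoCocycles) (x y z : V) :
    alt α x (y * z) = alt α x y * alt α x z := by
  rw [← inv_inj, ← alt_swap, alt_mul_left hα, alt_swap, alt_swap α x z, mul_inv]

end Cocycles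

@[ext]
structure TwistedProd {V A : Type*} (γ : V → V → A) where
  base : V
  fiber : A

namespace TwistedProd

variable {V A : Type*} [CommGroup V] [CommGroup A] {γ : V → V → A}

instance : Mul (TwistedProd γ) :=
  ⟨fun p q => ⟨p.base * q.base, p.fiber * q.fiber * γ p.base q.base⟩⟩

instance : One (TwistedProd γ) := ⟨⟨1, 1⟩⟩

instance : Inv (TwistedProd γ) := ⟨fun p => ⟨p.base⁻¹, (p.fiber * γ p.base⁻¹ p.base)⁻¹⟩⟩

@[simp] theorem mul_base (p q : TwistedProd γ) : (p * q).base = p.base * q.base := rfl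

@[simp] theorem mul_fiber (p q : TwistedProd γ) :
    (p * q).fiber = p.fiber * q.fiber * γ p.base q.base := rfl

@[simp] theorem one_base : (1 : TwistedProd γ).base = 1 := rfl

@[simp] theorem one_fiber : (1 : TwistedProd γ).fiber = 1 := rfl

@[reducible]
def commGroup (h1 : ∀ x, γ 1 x = 1) (hγ : γ ∈ twoCocycles) (hs : ∀ x y, γ x y = γ y x) :
    CommGroup (TwistedProd γ) where
  mul_assoc p q r := by
    ext
    · exact mul_assoc _ _ _
    · simp only [mul_fiber, mul_base]
      calc p.fiber * q.fiber * γ p.base q.base * r.fiber * γ (p.base * q.base) r.base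
          = p.fiber * q.fiber * r.fiber * (γ p.base q.base * γ (p.base * q.base) r.base) := by
            simp only [mul_comm, mul_left_comm]
        _ = p.fiber * (q.fiber * r.fiber * γ q.base r.base) * γ p.base (q.base * r.base) := by
            rw [hγ]; simp only [mul_comm, mul_left_comm]
  one_mul p := by ext <;> simp [h1]
  mul_one p := by ext <;> simp [hs _ 1, h1]
  inv_mul_cancel p := by
    ext
    · exact inv_mul_cancel _
    · exact (mul_assoc _ _ _).trans (inv_mul_cancel _)
  mul_comm p q := by ext <;> simp only [mul_base, mul_fiber, mul_comm p.base, mul_comm p.fiber, hs]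

end TwistedProd

theorem exists_retraction_of_injective {A E : Type*} [CommGroup A] [RootableBy A ℕ] [CommGroup E]
    (i : A →* E) (hi : Function.Injective i) : ∃ r : E →* A, ∀ a, r (i a) = a := by
  let : DivisibleBy (Additive A) ℕ :=
    divisibleByOfSMulRightSurj _ _ fun hn => RootableBy.surjective_pow A ℕ hn
  let := AddGroup.divisibleByIntOfDivisibleByNat (Additive A)
  obtain ⟨r, hr⟩ := (Module.Baer.of_divisible (Additive A)).extension_property_addMonoidHom
    (MonoidHom.toAdditive i) hi (AddMonoidHom.id _)
  exact ⟨MonoidHom.toAdditive.symm r, fun a => DFunLike.congr_fun hr (Additive.ofMul a)⟩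

theorem exists_coboundary_iff_symm {V A : Type*} [CommGroup V] [CommGroup A] [RootableBy A ℕ]
    {γ : V → V → A} (h1 : ∀ x, γ 1 x = 1) (hγ : γ ∈ twoCocycles) :
    (∃ η : V → A, η 1 = 1 ∧ ∀ x y, γ x y = η x * η y * (η (x * y))⁻¹) ↔
      ∀ x y, γ x y = γ y x := by
  refine ⟨fun ⟨η, _, hη⟩ x y => by rw [hη, hη, mul_comm x, mul_comm (η x)], fun hs => ?_⟩
  let := TwistedProd.commGroup h1 hγ hs
  let i : A →* TwistedProd γ :=
    { toFun a := ⟨1, a⟩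
      map_one' := rfl
      map_mul' a b := by ext <;> simp [h1] }
  obtain ⟨r, hr⟩ := exists_retraction_of_injective i fun a b h => congrArg TwistedProd.fiber h
  refine ⟨fun x => r ⟨x, 1⟩, map_one r, fun x y => ?_⟩
  have hsplit : (⟨x, 1⟩ * ⟨y, 1⟩ : TwistedProd γ) = ⟨x * y, 1⟩ * i (γ x y) := by
    ext <;> simp [i, hs _ 1, h1]
  have := congrArg r hsplit
  rw [map_mul, map_mul, hr] at this
  rw [this, mul_inv_cancel_comm]

section Bicharacters

variable {V A : Type*} [CommGroup V] [CommGroup A]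

theorem prod_ite_lt_mul_prod_ite_gt {ι M : Type*} [Fintype ι] [LinearOrder ι] [CommMonoid M]
    (t : ι → ι → M) (ht : ∀ i, t i i = 1) :
    (∏ i, ∏ j, if i < j then t i j else 1) * (∏ i, ∏ j, if j < i then t i j else 1) =
      ∏ i, ∏ j, t i j := by
  simp only [← prod_mul_distrib]
  refine prod_congr rfl fun i _ => prod_congr rfl fun j _ => ?_
  rcases lt_trichotomy i j with h | rfl | h
  · simp [h, h.not_gt]
  · simp [ht]
  · simp [h, h.not_gt]

theorem MonoidHom.apply_swap_eq_inv (ω : V →* V →* A) (hω : ∀ x, ω x x = 1) (x y : V) :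
    ω y x = (ω x y)⁻¹ := by
  have h := hω (x * y)
  simp only [map_mul, MonoidHom.mul_apply, hω, one_mul, mul_one] at h
  exact eq_inv_of_mul_eq_one_left h

theorem MonoidHom.apply_eq_one_of_mem_zpowers (ω : V →* V →* A) (hω : ∀ x, ω x x = 1) {g x y : V}
    (hx : x ∈ Subgroup.zpowers g) (hy : y ∈ Subgroup.zpowers g) : ω x y = 1 := by
  obtain ⟨m, rfl⟩ := Subgroup.mem_zpowers_iff.mp hx
  obtain ⟨n, rfl⟩ := Subgroup.mem_zpowers_iff.mp hy
  rw [map_zpow, map_zpow, MonoidHom.zpow_apply, hω, one_zpow, one_zpow]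

theorem exists_cyclic_projections [Finite V] :
    ∃ (ι : Type) (_ : Fintype ι) (p : ι → V →* V),
      (∀ x, ∏ i, p i x = x) ∧ ∀ i, ∃ g, ∀ x, p i x ∈ Subgroup.zpowers g := by
  classical
  obtain ⟨ι, _, n, -, ⟨e⟩⟩ := CommGroup.equiv_prod_multiplicative_zmod_of_finite V
  let f i : Multiplicative (ZMod (n i)) →* V :=
    e.symm.toMonoidHom.comp (MonoidHom.mulSingle (fun i => Multiplicative (ZMod (n i))) i)
  refine ⟨ι, inferInstance, fun i => (f i).comp ((Pi.evalMonoidHom _ i).comp e.toMonoidHom),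
    fun x => ?_, fun i => ⟨f i (Multiplicative.ofAdd 1), fun x => ?_⟩⟩
  · simp [f, ← map_prod, univ_prod_mulSingle]
  · refine Subgroup.mem_zpowers_iff.mpr ⟨ZMod.cast (e x i).toAdd, ?_⟩
    rw [← map_zpow, ← ofAdd_zsmul, zsmul_one, ZMod.intCast_zmod_cast]
    rfl

theorem exists_bichar_alt_eq_of_projections {ι : Type*} [Fintype ι] [LinearOrder ι]
    (ω : V →* V →* A) (hω : ∀ x, ω x x = 1) (p : ι → V →* V) (hp : ∀ x, ∏ i, p i x = x)
    (hcyc : ∀ i, ∃ g, ∀ x, p i x ∈ Subgroup.zpowers g) :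
    ∃ β : V →* V →* A, ∀ x y, β x y * (β y x)⁻¹ = ω x y := by
  let β : V →* V →* A := ∏ i, ∏ j, if i < j then (ω.comp (p i)).compl₂ (p j) else 1
  have hβ x y : β x y = ∏ i, ∏ j, if i < j then ω (p i x) (p j y) else 1 := by
    simp only [β, MonoidHom.finsetProd_apply]
    refine prod_congr rfl fun i _ => prod_congr rfl fun j _ => ?_
    split_ifs <;> rfl
  have hβ_inv x y : (β y x)⁻¹ = ∏ i, ∏ j, if j < i then ω (p i x) (p j y) else 1 := by
    rw [hβ, prod_comm]
    simp only [← prod_inv_distrib]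
    refine prod_congr rfl fun i _ => prod_congr rfl fun j _ => ?_
    split_ifs
    · exact (ω.apply_swap_eq_inv hω _ _).symm
    · exact inv_one
  refine ⟨β, fun x y => ?_⟩
  calc β x y * (β y x)⁻¹
      = (∏ i, ∏ j, if i < j then ω (p i x) (p j y) else 1) *
          ∏ i, ∏ j, if j < i then ω (p i x) (p j y) else 1 := by
        rw [hβ, hβ_inv]
    _ = ∏ i, ∏ j, ω (p i x) (p j y) := by
        refine prod_ite_lt_mul_prod_ite_gt _ fun i => ?_
        obtain ⟨g, hg⟩ := hcyc i
        exact ω.apply_eq_one_of_mem_zpowers hω (hg x) (hg y)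
    _ = ω x y := by
        conv_rhs => rw [← hp x, ← hp y]
        simp only [map_prod, MonoidHom.finsetProd_apply]
        exact prod_comm

theorem exists_bichar_alt_eq [Finite V] (ω : V →* V →* A) (hω : ∀ x, ω x x = 1) :
    ∃ β : V →* V →* A, ∀ x y, β x y * (β y x)⁻¹ = ω x y := by
  obtain ⟨ι, _, p, hp, hcyc⟩ := exists_cyclic_projections (V := V)
  let : LinearOrder ι := LinearOrder.lift' (Fintype.equivFin ι) (Fintype.equivFin ι).injective
  exact exists_bichar_alt_eq_of_projections ω hω p hp hcyc

end Bicharacters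

/-- For a finite abelian group `V` and a field `k` with divisible unit group,
the map `Alt : α ↦ ((x,y) ↦ α(x,y)/α(y,x))` sends 2-cocycles to
skew-symmetric bicharacters, is a group homomorphism, and induces an
isomorphism `H²(V,k*) ≅ ∧²V̂`: it is surjective onto skew-symmetric
bicharacters, and two cocycles have the same image iff they differ by a
coboundary. -/
theorem stmt_3 (V : Type) [CommGroup V] [Fintype V] (k : Type) [Field k]
    (hdiv : ∀ m : ℕ, m ≠ 0 → ∀ a : kˣ, ∃ b : kˣ, b ^ m = a) :
    (∀ α : V → V → kˣ, IsCocycle3 α →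
      IsSkewBichar3 (fun x y => α x y * (α y x)⁻¹)) ∧
    (∀ α β : V → V → kˣ, ∀ x y : V,
      (α x y * β x y) * ((α y x * β y x))⁻¹
        = (α x y * (α y x)⁻¹) * (β x y * (β y x)⁻¹)) ∧
    (∀ ω : V → V → kˣ, IsSkewBichar3 ω →
      ∃ α : V → V → kˣ, IsCocycle3 α ∧ ∀ x y, α x y * (α y x)⁻¹ = ω x y) ∧
    (∀ α β : V → V → kˣ, IsCocycle3 α → IsCocycle3 β →
      ((∀ x y, α x y * (α y x)⁻¹ = β x y * (β y x)⁻¹) ↔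
        IsCoboundary3 (fun x y => α x y * (β x y)⁻¹))) := by
  let : RootableBy kˣ ℕ := rootableByOfPowLeftSurj _ _ fun hm a => hdiv _ hm a
  refine ⟨?_, fun α β x y => congrFun₂ (map_mul alt α β) x y, ?_, ?_⟩
  · rintro α ⟨-, hα⟩
    exact ⟨alt_mul_left hα, alt_mul_right hα, alt_self α⟩
  · rintro ω ⟨hl, hr, hself⟩
    let ω' : V →* V →* kˣ :=
      MonoidHom.mk' (fun x => MonoidHom.mk' (ω x) (hr x)) fun x y => MonoidHom.ext (hl x y)
    obtain ⟨β, hβ⟩ := exists_bichar_alt_eq ω' hself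
    exact ⟨fun x y => β x y, ⟨fun x => ⟨by simp, by simp⟩, bichar_mem_twoCocycles β⟩, hβ⟩
  · rintro α β ⟨hα1, hα⟩ ⟨hβ1, hβ⟩
    have h1 x : (α * β⁻¹) 1 x = 1 := by simp [(hα1 x).1, (hβ1 x).1]
    exact (forall₂_congr (alt_eq_alt_iff α β)).trans
      (exists_coboundary_iff_symm h1 (mul_mem hα (inv_mem hβ))).symm
end

section
/- Let N be a group, A an abelian group with trivial N-action (multiplicative notation), and σ ∈ Z²(N,A) a normalized 2-cocycle. Define γ_σ(x,y) = σ(x,y)·σ(xy,x^{-1})·σ(x,x^{-1})^{-1}. Then the pair (σ, γ_σ) satisfies: σ(x,y)γ_σ(g, xy) = σ(ᵍx, ᵍy)γ_σ(g,x)γ_σ(g,y) and γ_σ(gh, x) = γ_σ(h,x)·γ_σ(g, ʰx) for all g,h,x,y ∈ N, where ᵍx = gxg^{-1}. -/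
/-!
Let `E` be the central extension of `N` by `A` defined by `σ`, with a section `s` such that
`s g * s x = σ g x • s (g * x)`. Conjugation by `s g` is an automorphism of `E` lying over
conjugation by `g`, and `s g * s x * (s g)⁻¹ = τ g x • s (g * x * g⁻¹)` with
`τ g x = σ g x / σ (g * x * g⁻¹) g`; for normalized `σ` this `τ` is `γ`. Applying the automorphism
to `s x * s y = σ x y • s (x * y)` gives the first identity. Since `s (g * h)` differs from
`s g * s h` by a central element, conjugating by it is conjugating by `s h` and then by `s g`,
which gives the second.
-/

namespace TwoCocycle

variable {N A : Type*} [Group N] [CommGroup A]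

def conjFactor (σ : N → N → A) (g x : N) : A :=
  σ g x / σ (g * x * g⁻¹) g

variable {σ : N → N → A}

theorem conjFactor_mul_right (hσ : ∀ x y z, σ x y * σ (x * y) z = σ y z * σ x (y * z))
    (g x y : N) :
    σ x y * conjFactor σ g (x * y)
      = σ (g * x * g⁻¹) (g * y * g⁻¹) * conjFactor σ g x * conjFactor σ g y := by
  have e₁ := congrArg Additive.ofMul (hσ g x y)
  have e₂ := congrArg Additive.ofMul (hσ (g * x * g⁻¹) g y)
  have e₃ := congrArg Additive.ofMul (hσ (g * x * g⁻¹) (g * y * g⁻¹) g)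
  rw [inv_mul_cancel_right] at e₂
  rw [inv_mul_cancel_right, show g * x * g⁻¹ * (g * y * g⁻¹) = g * (x * y) * g⁻¹ by group] at e₃
  apply Additive.ofMul.injective
  simp only [conjFactor, ofMul_mul, ofMul_div] at e₁ e₂ e₃ ⊢
  linear_combination (norm := abel) e₂ - e₁ - e₃

theorem conjFactor_mul_left (hσ : ∀ x y z, σ x y * σ (x * y) z = σ y z * σ x (y * z))
    (g h x : N) :
    conjFactor σ (g * h) x = conjFactor σ h x * conjFactor σ g (h * x * h⁻¹) := by
  have e₁ := congrArg Additive.ofMul (hσ g h x)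
  have e₂ := congrArg Additive.ofMul (hσ g (h * x * h⁻¹) h)
  have e₃ := congrArg Additive.ofMul (hσ (g * (h * x * h⁻¹) * g⁻¹) g h)
  rw [inv_mul_cancel_right] at e₂ e₃
  apply Additive.ofMul.injective
  simp only [conjFactor, ofMul_mul, ofMul_div] at e₁ e₂ e₃ ⊢
  rw [show g * h * x * (g * h)⁻¹ = g * (h * x * h⁻¹) * g⁻¹ by group]
  linear_combination (norm := abel) e₁ - e₂ + e₃

theorem cocycle_self_inv_eq_inv_self (hnorm : ∀ x, σ 1 x = 1 ∧ σ x 1 = 1)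
    (hσ : ∀ x y z, σ x y * σ (x * y) z = σ y z * σ x (y * z)) (g : N) :
    σ g g⁻¹ = σ g⁻¹ g := by
  simpa [(hnorm g).1, (hnorm g).2] using hσ g g⁻¹ g

theorem cocycle_mul_mul_inv_eq_conjFactor (hnorm : ∀ x, σ 1 x = 1 ∧ σ x 1 = 1)
    (hσ : ∀ x y z, σ x y * σ (x * y) z = σ y z * σ x (y * z)) (g x : N) :
    σ g x * σ (g * x) g⁻¹ * (σ g g⁻¹)⁻¹ = conjFactor σ g x := by
  have key : σ (g * x) g⁻¹ * σ (g * x * g⁻¹) g = σ g g⁻¹ := by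
    simpa [(hnorm _).2, cocycle_self_inv_eq_inv_self hnorm hσ] using hσ (g * x) g⁻¹ g
  rw [conjFactor, ← key, mul_inv, ← mul_assoc, mul_inv_cancel_right, div_eq_mul_inv]

end TwoCocycle

/-- Let `σ ∈ Z²(N,A)` be a normalized 2-cocycle (trivial action on the
abelian group `A`) and `γ_σ(x,y) = σ(x,y)·σ(xy,x⁻¹)·σ(x,x⁻¹)⁻¹`.  Then
`(σ, γ_σ)` satisfies the cocycle conditions (C2) and (C3) for the conjugation
action of `N` on itself. -/
theorem stmt_13 (N : Type) [Group N] (A : Type) [CommGroup A]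
    (σ : N → N → A)
    (hnorm : ∀ x, σ 1 x = 1 ∧ σ x 1 = 1)
    (hcoc : ∀ x y z, σ x y * σ (x * y) z = σ y z * σ x (y * z)) :
    let γ : N → N → A := fun x y => σ x y * σ (x * y) x⁻¹ * (σ x x⁻¹)⁻¹
    (∀ g x y, σ x y * γ g (x * y)
        = σ (g * x * g⁻¹) (g * y * g⁻¹) * γ g x * γ g y) ∧
    (∀ g h x, γ (g * h) x = γ h x * γ g (h * x * h⁻¹)) := by
  intro γ
  have hγ : γ = TwoCocycle.conjFactor σ :=
    funext₂ (TwoCocycle.cocycle_mul_mul_inv_eq_conjFactor hnorm hcoc)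
  rw [hγ]
  exact ⟨TwoCocycle.conjFactor_mul_right hcoc, TwoCocycle.conjFactor_mul_left hcoc⟩
end

section
/- Let V be a finite abelian group of exponent n, k a field, and σ ∈ Z²(V, k*) a non-degenerate 2-cocycle, meaning the skew-symmetric form Alt(σ)(x,y) = σ(x,y)/σ(y,x) is a non-degenerate bicharacter. Then k contains a primitive n-th root of unity. -/
/-!
Choose `x ∈ V` of order `n = exp V`. Since `Alt(σ)` is non-degenerate, the character
`ψ = Alt(σ)(x, -) : V → k*` also has order `n` in the group of characters. The order of a
character is the exponent of its image, a finite subgroup of `k*`; as `k*` is commutative, that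
subgroup contains an element whose order is its exponent, i.e. a primitive `n`-th root of unity.
-/

theorem MonoidHom.orderOf_eq_exponent_range {M G : Type*} [Group M] [CommGroup G]
    (f : M →* G) : orderOf f = Monoid.exponent f.range := by
  refine eq_of_forall_dvd fun m => ?_
  rw [orderOf_dvd_iff_pow_eq_one, Monoid.exponent_dvd_iff_forall_pow_eq_one, MonoidHom.ext_iff]
  simp only [MonoidHom.pow_apply, MonoidHom.one_apply, Subtype.forall, MonoidHom.mem_range,
    forall_exists_index, SubmonoidClass.mk_pow, Subgroup.mk_eq_one]
  exact ⟨fun h _ y hy => hy ▸ h y, fun h y => h _ y rfl⟩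

theorem MonoidHom.exists_isPrimitiveRoot_orderOf {V k : Type*} [Group V] [Finite V] [Field k]
    (ψ : V →* kˣ) : ∃ ζ : k, IsPrimitiveRoot ζ (orderOf ψ) := by
  have : Finite ψ.range := Set.finite_range ψ
  obtain ⟨g, hg⟩ :=
    Monoid.exists_orderOf_eq_exponent (Monoid.ExponentExists.of_finite (G := ψ.range))
  refine ⟨((g : kˣ) : k), ?_⟩
  rw [IsPrimitiveRoot.coe_units_iff, ψ.orderOf_eq_exponent_range, ← hg, ← Subgroup.orderOf_coe]
  exact IsPrimitiveRoot.orderOf _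

theorem exists_orderOf_eq_exponent_of_injective_pairing {V G : Type*} [CommGroup V] [Finite V]
    [CommGroup G] (B : V →* V →* G) (hB : Function.Injective B) :
    ∃ ψ : V →* G, orderOf ψ = Monoid.exponent V := by
  obtain ⟨x, hx⟩ := Monoid.exists_orderOf_eq_exponent (Monoid.ExponentExists.of_finite (G := V))
  exact ⟨B x, (orderOf_injective B hB x).trans hx⟩

def altPairing {V G : Type*} [Group V] [CommGroup G] (σ : V → V → G)
    (hb1 : ∀ x y z, σ (x * y) z * (σ z (x * y))⁻¹
        = (σ x z * (σ z x)⁻¹) * (σ y z * (σ z y)⁻¹))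
    (hb2 : ∀ x y z, σ x (y * z) * (σ (y * z) x)⁻¹
        = (σ x y * (σ y x)⁻¹) * (σ x z * (σ z x)⁻¹)) : V →* V →* G :=
  MonoidHom.mk' (fun x => MonoidHom.mk' (fun y => σ x y * (σ y x)⁻¹) (hb2 x))
    fun x y => MonoidHom.ext (hb1 x y)

theorem stmt_15_general (V : Type) [CommGroup V] [Fintype V] (n : ℕ)
    (hexp : Monoid.exponent V = n) (k : Type) [Field k]
    (σ : V → V → kˣ)
    (hb1 : ∀ x y z, σ (x * y) z * (σ z (x * y))⁻¹
        = (σ x z * (σ z x)⁻¹) * (σ y z * (σ z y)⁻¹))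
    (hb2 : ∀ x y z, σ x (y * z) * (σ (y * z) x)⁻¹
        = (σ x y * (σ y x)⁻¹) * (σ x z * (σ z x)⁻¹))
    (hnd : ∀ x : V, (∀ y : V, σ x y * (σ y x)⁻¹ = 1) → x = 1) :
    ∃ ζ : k, IsPrimitiveRoot ζ n := by
  have hinj : Function.Injective (altPairing σ hb1 hb2) :=
    (injective_iff_map_eq_one _).2 fun x hx => hnd x fun y => DFunLike.congr_fun hx y
  obtain ⟨ψ, hψ⟩ := exists_orderOf_eq_exponent_of_injective_pairing _ hinj
  rw [← hexp, ← hψ]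
  exact ψ.exists_isPrimitiveRoot_orderOf

/-- If a finite abelian group `V` of exponent `n` admits a non-degenerate
2-cocycle `σ` with values in `k*` (i.e. `Alt(σ)(x,y) = σ(x,y)/σ(y,x)` is a
non-degenerate bicharacter), then `k` contains a primitive `n`-th root of
unity. -/
theorem stmt_15 (V : Type) [CommGroup V] [Fintype V] (n : ℕ)
    (hexp : Monoid.exponent V = n) (k : Type) [Field k]
    (σ : V → V → kˣ)
    (hnorm : ∀ x, σ 1 x = 1 ∧ σ x 1 = 1)
    (hcoc : ∀ x y z, σ x y * σ (x * y) z = σ y z * σ x (y * z))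
    (hb1 : ∀ x y z, σ (x * y) z * (σ z (x * y))⁻¹
        = (σ x z * (σ z x)⁻¹) * (σ y z * (σ z y)⁻¹))
    (hb2 : ∀ x y z, σ x (y * z) * (σ (y * z) x)⁻¹
        = (σ x y * (σ y x)⁻¹) * (σ x z * (σ z x)⁻¹))
    (hnd : ∀ x : V, (∀ y : V, σ x y * (σ y x)⁻¹ = 1) → x = 1) :
    ∃ ζ : k, IsPrimitiveRoot ζ n :=
  stmt_15_general V n hexp k σ hb1 hb2 hnd
end

section
/- Let V be a finite abelian group of odd order, k a field, and ω : V × V → k* a non-degenerate skew-symmetric bicharacter. Given a decomposition V = U ⊕ W with ω(u,u')=1 for u,u' ∈ U and ω(w,w')=1 for w,w' ∈ W (a Lagrangian decomposition), the twisted group algebra k_ω[V] (basis u_v, v ∈ V, with u_v u_{v'} = ω-twisted product via a 2-cocycle with alternation ω) acts irreducibly on the k-vector space with basis {t_b : b ∈ U} via u_{x⊕y}·t_b = ω(y,b)·t_{x+b}, and this makes the span a module over the twisted group algebra with the bicharacter 2-cocycle α(x⊕y, x'⊕y') = ω(y,x'). -/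
/-!
Writing `φ_y(c) = ω((0,y),(c,0))`, the operator `ρ(0,y)` is multiplication by the character `φ_y`
of `U` and `ρ(x,0)` is translation by `x`. By non-degeneracy of `ω` and the Lagrangian conditions,
the characters `φ_y` separate the points of `U`. A nonzero invariant subspace therefore contains,
after multiplying a nonzero element by suitable factors `φ_y - φ_y(c)`, a delta function, and then
all of its translates, which span `U → k`.
-/

section Bicharacter

variable {G M : Type*} [AddGroup G] [Group M] {ω : G → G → M}

theorem bichar_zero_left (hb1 : ∀ v v' v'' : G, ω (v + v') v'' = ω v v'' * ω v' v'') (v : G) :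
    ω 0 v = 1 := by
  simpa using hb1 0 0 v

theorem bichar_mul_swap_eq_one (hb1 : ∀ v v' v'' : G, ω (v + v') v'' = ω v v'' * ω v' v'')
    (hb2 : ∀ v v' v'' : G, ω v (v' + v'') = ω v v' * ω v v'') (hskew : ∀ v : G, ω v v = 1)
    (v v' : G) : ω v v' * ω v' v = 1 := by
  simpa [hb1, hb2, hskew] using hskew (v + v')

end Bicharacter

section Lagrangian

variable {U W M : Type*} [AddCommGroup U] [AddCommGroup W] [CommGroup M] {ω : U × W → U × W → M}

theorem bichar_eq_mul_inv_of_lagrangian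
    (hb1 : ∀ v v' v'' : U × W, ω (v + v') v'' = ω v v'' * ω v' v'')
    (hb2 : ∀ v v' v'' : U × W, ω v (v' + v'') = ω v v' * ω v v'') (hskew : ∀ v : U × W, ω v v = 1)
    (hU : ∀ u u' : U, ω (u, 0) (u', 0) = 1) (hW : ∀ w w' : W, ω (0, w) (0, w') = 1)
    (v v' : U × W) : ω (0, v.2) (v'.1, 0) * (ω (0, v'.2) (v.1, 0))⁻¹ = ω v v' := by
  obtain ⟨x, y⟩ := v
  obtain ⟨x', y'⟩ := v'
  have hsplit : ω (x, y) (x', y') = ω (x, 0) (0, y') * ω (0, y) (x', 0) := by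
    have e : ∀ (a : U) (b : W), ((a, b) : U × W) = (a, 0) + (0, b) := by simp
    rw [e x y, hb1, e x' y', hb2, hb2, hU, hW, one_mul, mul_one]
  have hswap : (ω (0, y') (x, 0))⁻¹ = ω (x, 0) (0, y') :=
    inv_eq_of_mul_eq_one_right (bichar_mul_swap_eq_one hb1 hb2 hskew _ _)
  rw [hswap, hsplit, mul_comm]

theorem bichar_pairing_injective (hb1 : ∀ v v' v'' : U × W, ω (v + v') v'' = ω v v'' * ω v' v'')
    (hb2 : ∀ v v' v'' : U × W, ω v (v' + v'') = ω v v' * ω v v'') (hskew : ∀ v : U × W, ω v v = 1)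
    (hnd : ∀ v : U × W, (∀ v', ω v v' = 1) → v = 0)
    (hU : ∀ u u' : U, ω (u, 0) (u', 0) = 1) (hW : ∀ w w' : W, ω (0, w) (0, w') = 1) :
    Function.Injective fun (u : U) (w : W) => ω (0, w) (u, 0) := by
  intro u u' h
  have hdiff : ∀ w : W, ω (0, w) (u - u', 0) = 1 := by
    intro w
    have hadd := hb2 (0, w) (u - u', 0) (u', 0)
    have hw : ω (0, w) (u, 0) = ω (0, w) (u', 0) := congrFun h w
    rw [Prod.mk_add_mk, sub_add_cancel, add_zero, hw] at hadd
    exact mul_eq_right.1 hadd.symm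
  have hrad : ((u - u', 0) : U × W) = 0 := by
    refine hnd _ fun v' => ?_
    rw [← bichar_eq_mul_inv_of_lagrangian hb1 hb2 hskew hU hW]
    simp [hdiff, Prod.mk_zero_zero, bichar_zero_left hb1]
  simpa [sub_eq_zero] using congrArg Prod.fst hrad

end Lagrangian

section Irreducible

variable {ι k : Type*} [Fintype ι] [Field k]

theorem Submodule.single_mem_of_separating {A : Type*} [DecidableEq ι] (S : Submodule k (ι → k))
    (φ : A → ι → k) (hsep : ∀ i j, i ≠ j → ∃ a, φ a i ≠ φ a j)
    (hmul : ∀ a, ∀ f ∈ S, φ a * f ∈ S) {f : ι → k} (hf : f ∈ S) {i : ι} (hfi : f i ≠ 0) :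
    Pi.single i 1 ∈ S := by
  have hkill : ∀ T : Finset ι, i ∉ T → ∃ g ∈ S, g i ≠ 0 ∧ ∀ j ∈ T, g j = 0 := by
    intro T
    induction T using Finset.induction_on with
    | empty => exact fun _ => ⟨f, hf, hfi, by simp⟩
    | insert j T _ ih =>
      intro hiT
      obtain ⟨g, hgS, hgi, hgT⟩ := ih (fun h => hiT (Finset.mem_insert_of_mem h))
      obtain ⟨a, ha⟩ := hsep i j fun h => hiT (h ▸ Finset.mem_insert_self i T)
      refine ⟨φ a * g - φ a j • g, S.sub_mem (hmul a g hgS) (S.smul_mem _ hgS), ?_, ?_⟩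
      · simpa [← sub_mul] using And.intro (sub_ne_zero.2 ha) hgi
      · simp only [Finset.mem_insert]
        rintro l (rfl | hl)
        · simp
        · simp [hgT l hl]
  obtain ⟨g, hgS, hgi, hg⟩ := hkill (Finset.univ.erase i) (Finset.notMem_erase i _)
  have hg_single : g = g i • Pi.single i 1 := by
    ext j
    by_cases hj : j = i
    · simp [hj]
    · simp [hj, hg j (Finset.mem_erase.2 ⟨hj, Finset.mem_univ j⟩)]
  exact (S.smul_mem_iff hgi).1 (hg_single ▸ hgS)

theorem Submodule.eq_bot_or_eq_top_of_separating [AddGroup ι] {A : Type*} (S : Submodule k (ι → k))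
    (φ : A → ι → k) (hsep : ∀ i j, i ≠ j → ∃ a, φ a i ≠ φ a j)
    (hmul : ∀ a, ∀ f ∈ S, φ a * f ∈ S) (htrans : ∀ x, ∀ f ∈ S, (fun c => f (c - x)) ∈ S) :
    S = ⊥ ∨ S = ⊤ := by
  classical
  refine or_iff_not_imp_left.2 fun hS => ?_
  obtain ⟨f, hfS, hf0⟩ := (Submodule.ne_bot_iff S).1 hS
  obtain ⟨i, hfi⟩ := Function.ne_iff.1 hf0
  have hi := S.single_mem_of_separating φ hsep hmul hfS hfi
  have hsingle : ∀ j, Pi.single j (1 : k) ∈ S := by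
    intro j
    convert htrans (-i + j) _ hi using 1
    ext c
    simp [Pi.single_apply, sub_eq_iff_eq_add, add_neg_cancel_left]
  rw [eq_top_iff, ← (Pi.basisFun k ι).span_eq, Submodule.span_le]
  rintro _ ⟨j, rfl⟩
  simpa using hsingle j

end Irreducible

section Schrodinger

variable {U W k : Type*} [AddCommGroup U] [AddCommGroup W] [CommRing k]

def schrodingerAction (ω : U × W → U × W → kˣ) (v : U × W) (f : U → k) : U → k :=
  fun c => (ω (0, v.2) (c - v.1, 0) : k) * f (c - v.1)

variable {ω : U × W → U × W → kˣ}

theorem schrodingerAction_comp (hb1 : ∀ v v' v'' : U × W, ω (v + v') v'' = ω v v'' * ω v' v'')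
    (hb2 : ∀ v v' v'' : U × W, ω v (v' + v'') = ω v v' * ω v v'') (v v' : U × W) (f : U → k) :
    schrodingerAction ω v (schrodingerAction ω v' f) =
      fun c => (ω (0, v.2) (v'.1, 0) : k) * schrodingerAction ω (v + v') f c := by
  obtain ⟨x, y⟩ := v
  obtain ⟨x', y'⟩ := v'
  funext c
  have hfst : ω (0, y) (c - x, 0) = ω (0, y) (x', 0) * ω (0, y) (c - (x + x'), 0) := by
    rw [← hb2, Prod.mk_add_mk, add_zero]
    congr 2
    abel
  have hsnd : ω (0, y + y') (c - (x + x'), 0) =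
      ω (0, y) (c - (x + x'), 0) * ω (0, y') (c - (x + x'), 0) := by
    rw [← hb1, Prod.mk_add_mk, add_zero]
  simp only [schrodingerAction, Prod.mk_add_mk, sub_sub, hfst, hsnd, Units.val_mul]
  ring

theorem schrodingerAction_zero (hb1 : ∀ v v' v'' : U × W, ω (v + v') v'' = ω v v'' * ω v' v'')
    (f : U → k) : schrodingerAction ω 0 f = f := by
  funext c
  simp [schrodingerAction, Prod.mk_zero_zero, bichar_zero_left hb1]

theorem schrodingerAction_zero_fst (w : W) (f : U → k) :
    schrodingerAction ω (0, w) f = (fun c => (ω (0, w) (c, 0) : k)) * f := by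
  funext c
  simp [schrodingerAction]

theorem schrodingerAction_zero_snd (hb1 : ∀ v v' v'' : U × W, ω (v + v') v'' = ω v v'' * ω v' v'')
    (x : U) (f : U → k) : schrodingerAction ω (x, 0) f = fun c => f (c - x) := by
  funext c
  simp [schrodingerAction, Prod.mk_zero_zero, bichar_zero_left hb1]

end Schrodinger

theorem stmt_16_general (k : Type) [Field k]
    (U W : Type) [AddCommGroup U] [AddCommGroup W] [Fintype U]
    (ω : U × W → U × W → kˣ)
    (hb1 : ∀ v v' v'' : U × W, ω (v + v') v'' = ω v v'' * ω v' v'')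
    (hb2 : ∀ v v' v'' : U × W, ω v (v' + v'') = ω v v' * ω v v'')
    (hskew : ∀ v : U × W, ω v v = 1)
    (hnd : ∀ v : U × W, (∀ v', ω v v' = 1) → v = 0)
    (hU : ∀ u u' : U, ω (u, 0) (u', 0) = 1)
    (hW : ∀ w w' : W, ω (0, w) (0, w') = 1) :
    let α : U × W → U × W → kˣ := fun v v' => ω (0, v.2) (v'.1, 0)
    let ρ : U × W → (U → k) → (U → k) :=
      fun v f c => ((ω (0, v.2) (c - v.1, 0) : kˣ) : k) * f (c - v.1)
    (∀ v v', α v v' * (α v' v)⁻¹ = ω v v') ∧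
    (∀ (v v' : U × W) (f : U → k),
      ρ v (ρ v' f) = fun c => ((α v v' : kˣ) : k) * ρ (v + v') f c) ∧
    (∀ f : U → k, ρ 0 f = f) ∧
    (∀ S : Submodule k (U → k),
      (∀ v f, f ∈ S → ρ v f ∈ S) → S = ⊥ ∨ S = ⊤) := by
  intro α ρ
  refine ⟨bichar_eq_mul_inv_of_lagrangian hb1 hb2 hskew hU hW, schrodingerAction_comp hb1 hb2,
    schrodingerAction_zero hb1, fun S hS => ?_⟩
  have hsep : ∀ c c' : U, c ≠ c' → ∃ w : W, (ω (0, w) (c, 0) : k) ≠ ω (0, w) (c', 0) := by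
    intro c c' hne
    by_contra! h
    exact hne (bichar_pairing_injective hb1 hb2 hskew hnd hU hW (funext fun w => Units.ext (h w)))
  refine S.eq_bot_or_eq_top_of_separating _ hsep (fun w f hf => ?_) (fun x f hf => ?_)
  · rw [← schrodingerAction_zero_fst]
    exact hS (0, w) f hf
  · rw [← schrodingerAction_zero_snd hb1]
    exact hS (x, 0) f hf

/-- Let `V = U ⊕ W` be a Lagrangian decomposition of a finite abelian group
of odd order with a non-degenerate skew-symmetric bicharacter `ω` valued in
`k*`, and let `α(x⊕y, x'⊕y') = ω(y,x')` be the associated bicharacter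
2-cocycle (which satisfies `Alt(α) = ω`).  Then the formula
`u_{x⊕y}·t_b = ω(y,b)·t_{x+b}` defines an action of the twisted group algebra
`k_α[V]` on the span of `{t_b : b ∈ U}`, and this action is irreducible. -/
theorem stmt_16 (k : Type) [Field k]
    (U W : Type) [AddCommGroup U] [AddCommGroup W] [Fintype U] [Fintype W]
    (hodd : Odd (Fintype.card (U × W)))
    (ω : U × W → U × W → kˣ)
    (hb1 : ∀ v v' v'' : U × W, ω (v + v') v'' = ω v v'' * ω v' v'')
    (hb2 : ∀ v v' v'' : U × W, ω v (v' + v'') = ω v v' * ω v v'')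
    (hskew : ∀ v : U × W, ω v v = 1)
    (hnd : ∀ v : U × W, (∀ v', ω v v' = 1) → v = 0)
    (hU : ∀ u u' : U, ω (u, 0) (u', 0) = 1)
    (hW : ∀ w w' : W, ω (0, w) (0, w') = 1) :
    let α : U × W → U × W → kˣ := fun v v' => ω (0, v.2) (v'.1, 0)
    let ρ : U × W → (U → k) → (U → k) :=
      fun v f c => ((ω (0, v.2) (c - v.1, 0) : kˣ) : k) * f (c - v.1)
    (∀ v v', α v v' * (α v' v)⁻¹ = ω v v') ∧
    (∀ (v v' : U × W) (f : U → k),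
      ρ v (ρ v' f) = fun c => ((α v v' : kˣ) : k) * ρ (v + v') f c) ∧
    (∀ f : U → k, ρ 0 f = f) ∧
    (∀ S : Submodule k (U → k),
      (∀ v f, f ∈ S → ρ v f ∈ S) → S = ⊥ ∨ S = ⊤) :=
  stmt_16_general k U W ω hb1 hb2 hskew hnd hU hW
end

section
/- Let G be a finite group, S ≤ G, and B an S-algebra over a field k which is a simple algebra such that the central primitive idempotents of Ind_S^G(B) are the characteristic functions χ_{Sg} of the right cosets of S. Then every G-equivariant algebra automorphism F of Ind_S^G(B) with F(χ_{Sg}) = χ_{Sg} for all g ∈ G is of the form Ind_S^G(T) for a unique S-equivariant algebra automorphism T of B; in particular the induction map Aut_S(B) → Aut_G(Ind_S^G(B)) is injective with image the subgroup of automorphisms fixing all the idempotents χ_{Sg}. -/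
/-!
Evaluating at the identity recovers `T`: put `T b := F (e b) 1`, where `e b` is the element of
`Ind_S^G(B)` supported on `S` with value `b` at `1`. Multiplying a right translate of `r` by the
idempotent `χ_S` cuts it down to `e (r x)`; since `F` commutes with right translations and fixes
`χ_S`, this gives `F r x = T (r x)`. The algebra structure of `T` is inherited from that of `F`,
bijectivity from that of `F`, and `S`-equivariance from `F (e b) ∈ Ind_S^G(B)`.
-/

namespace InducedAlgebra

variable {k G B : Type*} [CommSemiring k] [Group G] [Semiring B] [Algebra k B]
  {S : Subgroup G}

def induced (act : S →* (B ≃ₐ[k] B)) : Set (G → B) :=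
  {r | ∀ (s : S) (x : G), r ((s : G) * x) = act s (r x)}

variable {act : S →* (B ≃ₐ[k] B)}

theorem rightTranslate_mem {r : G → B} (hr : r ∈ induced act) (a : G) :
    (fun x => r (x * a)) ∈ induced act := fun s x => by
  simpa only [mul_assoc] using hr s (x * a)

variable [DecidablePred (· ∈ S)]

variable (S) in
def cosetIndicator (g : G) : G → B := fun x => if x * g⁻¹ ∈ S then 1 else 0

variable (act) in
def extendByZero (b : B) : G → B :=
  fun x => if h : x ∈ S then act ⟨x, h⟩ b else 0

theorem cosetIndicator_mem (g : G) : (cosetIndicator S g : G → B) ∈ induced act := by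
  intro s x
  have hmem : (s : G) * x * g⁻¹ ∈ S ↔ x * g⁻¹ ∈ S := by
    rw [mul_assoc]; exact S.mul_mem_cancel_left s.2
  by_cases hx : x * g⁻¹ ∈ S <;> simp [cosetIndicator, hmem, hx]

theorem extendByZero_mem (b : B) : extendByZero act b ∈ induced act := by
  intro s x
  by_cases hx : x ∈ S
  · have hsx : (s : G) * x ∈ S := S.mul_mem s.2 hx
    have hprod : (⟨(s : G) * x, hsx⟩ : S) = s * ⟨x, hx⟩ := rfl
    simp only [extendByZero, hsx, hx, dif_pos, hprod, map_mul]
    rfl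
  · have hsx : (s : G) * x ∉ S := (S.mul_mem_cancel_left s.2).not.mpr hx
    simp [extendByZero, hsx, hx]

@[simp]
theorem extendByZero_apply_coe (b : B) (s : S) : extendByZero act b (s : G) = act s b := by
  simp [extendByZero]

@[simp]
theorem extendByZero_apply_one (b : B) : extendByZero act b 1 = b := by
  simpa using extendByZero_apply_coe (act := act) b 1

theorem extendByZero_one : extendByZero act (1 : B) = cosetIndicator S 1 := by
  funext x
  by_cases hx : x ∈ S <;> simp [extendByZero, cosetIndicator, hx]

theorem extendByZero_mul (b b' : B) :
    extendByZero act (b * b') = extendByZero act b * extendByZero act b' := by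
  funext x
  by_cases hx : x ∈ S <;> simp [extendByZero, hx]

theorem extendByZero_add (b b' : B) :
    extendByZero act (b + b') = extendByZero act b + extendByZero act b' := by
  funext x
  by_cases hx : x ∈ S <;> simp [extendByZero, hx]

theorem extendByZero_smul (c : k) (b : B) :
    extendByZero act (c • b) = c • extendByZero act b := by
  funext x
  by_cases hx : x ∈ S <;> simp [extendByZero, hx]

theorem cosetIndicator_one_mul {r : G → B} (hr : r ∈ induced act) :
    cosetIndicator S 1 * r = extendByZero act (r 1) := by
  funext x
  by_cases hx : x ∈ S
  · simpa [cosetIndicator, extendByZero, hx] using hr ⟨x, hx⟩ 1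
  · simp [cosetIndicator, extendByZero, hx]

theorem eq_of_comp_eq {f f' : B → B}
    (h : ∀ r ∈ induced act, (fun x => f (r x)) = fun x => f' (r x)) : f = f' :=
  funext fun b => by simpa using congrFun (h _ (extendByZero_mem (act := act) b)) 1

theorem comp_cosetIndicator {F : Type*} [FunLike F B B] [ZeroHomClass F B B] [OneHomClass F B B]
    (f : F) (g : G) : (fun x => f (cosetIndicator S g x)) = cosetIndicator S g := by
  funext x
  by_cases hx : x * g⁻¹ ∈ S <;> simp [cosetIndicator, hx]

variable (act) in
def descend (F : (G → B) → G → B) (b : B) : B :=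
  F (extendByZero act b) 1

variable {F : (G → B) → G → B}

theorem apply_eq_descend
    (hF_mul : ∀ r r', r ∈ induced act → r' ∈ induced act → F (r * r') = F r * F r')
    (hF_translate : ∀ (a : G) (r : G → B), r ∈ induced act →
      F (fun x => r (x * a)) = fun x => F r (x * a))
    (hF_χ : F (cosetIndicator S 1) = cosetIndicator S 1)
    {r : G → B} (hr : r ∈ induced act) (x : G) : F r x = descend act F (r x) := by
  have hrx := rightTranslate_mem hr x
  calc F r x = F (fun y => r (y * x)) 1 := by simpa using (congrFun (hF_translate x r hr) 1).symm
    _ = ((cosetIndicator S 1 : G → B) * F (fun y => r (y * x))) 1 := by simp [cosetIndicator]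
    _ = F ((cosetIndicator S 1 : G → B) * fun y => r (y * x)) 1 := by
      rw [hF_mul _ _ (cosetIndicator_mem 1) hrx, hF_χ]
    _ = descend act F (r x) := by rw [cosetIndicator_one_mul hrx]; simp [descend]

theorem map_extendByZero (hF_maps : Set.MapsTo F (induced act) (induced act))
    (hF_mul : ∀ r r', r ∈ induced act → r' ∈ induced act → F (r * r') = F r * F r')
    (hF_χ : F (cosetIndicator S 1) = cosetIndicator S 1) (b : B) :
    F (extendByZero act b) = extendByZero act (descend act F b) := by
  have hb := extendByZero_mem (act := act) b
  calc F (extendByZero act b) = F (cosetIndicator S 1 * extendByZero act b) := by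
        rw [cosetIndicator_one_mul hb, extendByZero_apply_one]
    _ = cosetIndicator S 1 * F (extendByZero act b) := by
        rw [hF_mul _ _ (cosetIndicator_mem 1) hb, hF_χ]
    _ = extendByZero act (descend act F b) := cosetIndicator_one_mul (hF_maps hb)

theorem descend_one (hF_χ : F (cosetIndicator S 1) = cosetIndicator S 1) :
    descend act F 1 = 1 := by
  simp [descend, extendByZero_one, hF_χ, cosetIndicator]

theorem descend_mul
    (hF_mul : ∀ r r', r ∈ induced act → r' ∈ induced act → F (r * r') = F r * F r')
    (b b' : B) : descend act F (b * b') = descend act F b * descend act F b' := by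
  simp only [descend, extendByZero_mul, hF_mul _ _ (extendByZero_mem b) (extendByZero_mem b'),
    Pi.mul_apply]

theorem descend_add
    (hF_add : ∀ r r', r ∈ induced act → r' ∈ induced act → F (r + r') = F r + F r')
    (b b' : B) : descend act F (b + b') = descend act F b + descend act F b' := by
  simp only [descend, extendByZero_add, hF_add _ _ (extendByZero_mem b) (extendByZero_mem b'),
    Pi.add_apply]

theorem descend_smul (hF_smul : ∀ (c : k) (r : G → B), r ∈ induced act → F (c • r) = c • F r)
    (c : k) (b : B) : descend act F (c • b) = c • descend act F b := by
  simp only [descend, extendByZero_smul, hF_smul c _ (extendByZero_mem b), Pi.smul_apply]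

theorem descend_injective (hF_bij : Set.BijOn F (induced act) (induced act))
    (hF_mul : ∀ r r', r ∈ induced act → r' ∈ induced act → F (r * r') = F r * F r')
    (hF_χ : F (cosetIndicator S 1) = cosetIndicator S 1) :
    Function.Injective (descend act F) := fun b b' h => by
  have hFeq : F (extendByZero act b) = F (extendByZero act b') := by
    rw [map_extendByZero hF_bij.mapsTo hF_mul hF_χ, map_extendByZero hF_bij.mapsTo hF_mul hF_χ, h]
  simpa using congrFun (hF_bij.injOn (extendByZero_mem b) (extendByZero_mem b') hFeq) 1

theorem descend_surjective (hF_surj : Set.SurjOn F (induced act) (induced act))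
    (hF_mul : ∀ r r', r ∈ induced act → r' ∈ induced act → F (r * r') = F r * F r')
    (hF_translate : ∀ (a : G) (r : G → B), r ∈ induced act →
      F (fun x => r (x * a)) = fun x => F r (x * a))
    (hF_χ : F (cosetIndicator S 1) = cosetIndicator S 1) :
    Function.Surjective (descend act F) := fun b => by
  obtain ⟨r, hr, hFr⟩ := hF_surj (extendByZero_mem (act := act) b)
  refine ⟨r 1, ?_⟩
  rw [← apply_eq_descend hF_mul hF_translate hF_χ hr, hFr, extendByZero_apply_one]

theorem descend_act (hF_maps : Set.MapsTo F (induced act) (induced act))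
    (hF_mul : ∀ r r', r ∈ induced act → r' ∈ induced act → F (r * r') = F r * F r')
    (hF_translate : ∀ (a : G) (r : G → B), r ∈ induced act →
      F (fun x => r (x * a)) = fun x => F r (x * a))
    (hF_χ : F (cosetIndicator S 1) = cosetIndicator S 1) (s : S) (b : B) :
    descend act F (act s b) = act s (descend act F b) := by
  have h := apply_eq_descend hF_mul hF_translate hF_χ (extendByZero_mem (act := act) b) s
  rwa [map_extendByZero hF_maps hF_mul hF_χ, extendByZero_apply_coe, extendByZero_apply_coe,
    eq_comm] at h

theorem existsUnique_algEquiv_comp (hF_bij : Set.BijOn F (induced act) (induced act))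
    (hF_mul : ∀ r r', r ∈ induced act → r' ∈ induced act → F (r * r') = F r * F r')
    (hF_add : ∀ r r', r ∈ induced act → r' ∈ induced act → F (r + r') = F r + F r')
    (hF_smul : ∀ (c : k) (r : G → B), r ∈ induced act → F (c • r) = c • F r)
    (hF_translate : ∀ (a : G) (r : G → B), r ∈ induced act →
      F (fun x => r (x * a)) = fun x => F r (x * a))
    (hF_χ : F (cosetIndicator S 1) = cosetIndicator S 1) :
    ∃! T : B ≃ₐ[k] B, (∀ (s : S) (b : B), T (act s b) = act s (T b)) ∧
      ∀ r ∈ induced act, F r = fun x => T (r x) := by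
  let T : B →ₐ[k] B := AlgHom.ofLinearMap
    { toFun := descend act F, map_add' := descend_add hF_add, map_smul' := descend_smul hF_smul }
    (descend_one hF_χ) (descend_mul hF_mul)
  have hF_eq : ∀ r ∈ induced act, F r = fun x => descend act F (r x) := fun r hr =>
    funext (apply_eq_descend hF_mul hF_translate hF_χ hr)
  refine ⟨AlgEquiv.ofBijective T ⟨descend_injective hF_bij hF_mul hF_χ,
      descend_surjective hF_bij.surjOn hF_mul hF_translate hF_χ⟩,
    ⟨descend_act hF_bij.mapsTo hF_mul hF_translate hF_χ, hF_eq⟩, ?_⟩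
  rintro T' ⟨-, hT'⟩
  refine AlgEquiv.ext (congrFun (eq_of_comp_eq (act := act) fun r hr => ?_))
  rw [← hT' r hr, hF_eq r hr]
  rfl

end InducedAlgebra

open InducedAlgebra

theorem stmt_19_general (k : Type) [Field k] (G : Type) [Group G]
    (S : Subgroup G) [DecidablePred (· ∈ S)] (B : Type) [Ring B] [Algebra k B]
    (act : S →* (B ≃ₐ[k] B)) :
    let Ind : Set (G → B) :=
      {r | ∀ (s : S) (x : G), r ((s : G) * x) = act s (r x)}
    let χ : G → (G → B) := fun g x => if x * g⁻¹ ∈ S then 1 else 0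
    let IsCentralIdem : (G → B) → Prop := fun e =>
      e ∈ Ind ∧ e * e = e ∧ ∀ r ∈ Ind, e * r = r * e
    (∀ e : G → B,
      (IsCentralIdem e ∧ e ≠ 0 ∧
        ∀ e₁ e₂ : G → B, IsCentralIdem e₁ → IsCentralIdem e₂ →
          e₁ ≠ 0 → e₂ ≠ 0 → e₁ * e₂ = 0 → e ≠ e₁ + e₂) ↔
        ∃ g : G, e = χ g) →
    (∀ F : (G → B) → (G → B),
      Set.BijOn F Ind Ind →
      (∀ r r', r ∈ Ind → r' ∈ Ind → F (r * r') = F r * F r') →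
      (∀ r r', r ∈ Ind → r' ∈ Ind → F (r + r') = F r + F r') →
      (∀ (c : k) (r : G → B), r ∈ Ind → F (c • r) = c • F r) →
      F (1 : G → B) = 1 →
      (∀ (a : G) (r : G → B), r ∈ Ind →
        F (fun x => r (x * a)) = fun x => F r (x * a)) →
      (∀ g : G, F (χ g) = χ g) →
      ∃! T : B ≃ₐ[k] B,
        (∀ (s : S) (b : B), T (act s b) = act s (T b)) ∧
        ∀ r ∈ Ind, F r = fun x => T (r x)) ∧
    (∀ T T' : B ≃ₐ[k] B,
      (∀ (s : S) (b : B), T (act s b) = act s (T b)) →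
      (∀ (s : S) (b : B), T' (act s b) = act s (T' b)) →
      (∀ r ∈ Ind, (fun x => T (r x)) = fun x => T' (r x)) → T = T') ∧
    (∀ T : B ≃ₐ[k] B,
      (∀ (s : S) (b : B), T (act s b) = act s (T b)) →
      ∀ g : G, (fun x => T (χ g x)) = χ g) := by
  intro Ind χ IsCentralIdem _
  refine ⟨fun F hF_bij hF_mul hF_add hF_smul _ hF_translate hF_χ => ?_,
    fun T T' _ _ h => AlgEquiv.ext (congrFun (eq_of_comp_eq (act := act) h)),
    fun T _ g => comp_cosetIndicator T g⟩
  exact existsUnique_algEquiv_comp hF_bij hF_mul hF_add hF_smul hF_translate (hF_χ 1)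

/-- Let `S ≤ G`, `B` a simple `S`-algebra over a field `k` such that the
central primitive idempotents of `Ind_S^G(B)` are exactly the characteristic
functions `χ_{Sg}` of the right cosets of `S`.  Then every `G`-equivariant
algebra automorphism `F` of `Ind_S^G(B)` fixing all `χ_{Sg}` equals
`Ind_S^G(T)` (i.e. `r ↦ T ∘ r`) for a unique `S`-equivariant algebra
automorphism `T` of `B`; moreover the induction map `Aut_S(B) →
Aut_G(Ind_S^G(B))` is injective and its image consists of automorphisms
fixing all the idempotents `χ_{Sg}`. -/
theorem stmt_19 (k : Type) [Field k] (G : Type) [Group G] [Fintype G]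
    (S : Subgroup G) [DecidablePred (· ∈ S)] (B : Type) [Ring B] [Algebra k B] [IsSimpleRing B]
    (act : S →* (B ≃ₐ[k] B)) :
    let Ind : Set (G → B) :=
      {r | ∀ (s : S) (x : G), r ((s : G) * x) = act s (r x)}
    let χ : G → (G → B) := fun g x => if x * g⁻¹ ∈ S then 1 else 0
    let IsCentralIdem : (G → B) → Prop := fun e =>
      e ∈ Ind ∧ e * e = e ∧ ∀ r ∈ Ind, e * r = r * e
    (∀ e : G → B,
      (IsCentralIdem e ∧ e ≠ 0 ∧
        ∀ e₁ e₂ : G → B, IsCentralIdem e₁ → IsCentralIdem e₂ →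
          e₁ ≠ 0 → e₂ ≠ 0 → e₁ * e₂ = 0 → e ≠ e₁ + e₂) ↔
        ∃ g : G, e = χ g) →
    (∀ F : (G → B) → (G → B),
      Set.BijOn F Ind Ind →
      (∀ r r', r ∈ Ind → r' ∈ Ind → F (r * r') = F r * F r') →
      (∀ r r', r ∈ Ind → r' ∈ Ind → F (r + r') = F r + F r') →
      (∀ (c : k) (r : G → B), r ∈ Ind → F (c • r) = c • F r) →
      F (1 : G → B) = 1 →
      (∀ (a : G) (r : G → B), r ∈ Ind →
        F (fun x => r (x * a)) = fun x => F r (x * a)) →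
      (∀ g : G, F (χ g) = χ g) →
      ∃! T : B ≃ₐ[k] B,
        (∀ (s : S) (b : B), T (act s b) = act s (T b)) ∧
        ∀ r ∈ Ind, F r = fun x => T (r x)) ∧
    (∀ T T' : B ≃ₐ[k] B,
      (∀ (s : S) (b : B), T (act s b) = act s (T b)) →
      (∀ (s : S) (b : B), T' (act s b) = act s (T' b)) →
      (∀ r ∈ Ind, (fun x => T (r x)) = fun x => T' (r x)) → T = T') ∧
    (∀ T : B ≃ₐ[k] B,
      (∀ (s : S) (b : B), T (act s b) = act s (T b)) →
      ∀ g : G, (fun x => T (χ g x)) = χ g) :=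
  stmt_19_general k G S B act
end
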